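/- Let H ≠ ℕ be a numerical semigroup with Frobenius number f = f(H), let k be a field, and set R = k[[H]]. If f − 1 ∉ QF(H), then t ∉ ω_Hⁿ for every n ≥ 1; in particular ω_Hⁿ ≠ k[[t]] for all n ≥ 1. -/

import Mathlib

set_option synthInstance.maxHeartbeats 400000
set_option maxHeartbeats 1000000

/-- The Frobenius number of a numerical semigroup `H ⊆ ℕ`: the largest natural number
not in `H` (meaningful when `H ≠ ℕ` and the complement of `H` is finite). -/
noncomputable def frobeniusNumber (H : AddSubmonoid ℕ) : ℕ :=
  sSup {x : ℕ | x ∉ H}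

/-- The set of quasi-Frobenius numbers of a numerical semigroup `H`:
`QF(H) = {x ∈ ℕ \ H : x + h ∈ H for every nonzero h ∈ H}`. -/
def QF (H : AddSubmonoid ℕ) : Set ℕ :=
  {x | x ∉ H ∧ ∀ h ∈ H, h ≠ 0 → x + h ∈ H}

/-- The semigroup power series ring `k[[H]]`: the subalgebra of `k[[t]]` of power series
whose `i`-th coefficient vanishes for all `i ∉ H`. -/
noncomputable def semigroupAlgebra (k : Type*) [Field k] (H : AddSubmonoid ℕ) :
    Subalgebra k (PowerSeries k) where
  carrier := {g | ∀ i : ℕ, i ∉ H → PowerSeries.coeff (R := k) i g = 0}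
  mul_mem' := by
    intro a b ha hb i hi
    rw [PowerSeries.coeff_mul]
    refine Finset.sum_eq_zero ?_
    rintro ⟨p, q⟩ hpq
    replace hpq : p + q = i := by simpa using hpq
    dsimp only
    by_cases hp : p ∈ H
    · by_cases hq : q ∈ H
      · exact absurd (hpq ▸ H.add_mem hp hq) hi
      · rw [hb q hq, mul_zero]
    · rw [ha p hp, zero_mul]
  one_mem' := by
    intro i hi
    have h0 : i ≠ 0 := fun h => hi (h ▸ H.zero_mem)
    rw [PowerSeries.coeff_one, if_neg h0]
  add_mem' := by
    intro a b ha hb i hi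
    rw [map_add, ha i hi, hb i hi, add_zero]
  zero_mem' := by
    intro i hi
    rw [map_zero]
  algebraMap_mem' := by
    intro r i hi
    have h0 : i ≠ 0 := fun h => hi (h ▸ H.zero_mem)
    simp only [PowerSeries.algebraMap_apply, PowerSeries.coeff_C, if_neg h0]

/-- The canonical module `ω_H` of `k[[H]]`: the `k[[H]]`-submodule of `k[[t]]`
generated by the monomials `t^(f(H) - x)` for `x ∈ QF(H)`. -/
noncomputable def canonicalModule (k : Type*) [Field k] (H : AddSubmonoid ℕ) :
    Submodule ↥(semigroupAlgebra k H) (PowerSeries k) :=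
  Submodule.span ↥(semigroupAlgebra k H)
    ((fun x => (PowerSeries.X : PowerSeries k) ^ (frobeniusNumber H - x)) '' QF H)

/-!
The power series with vanishing coefficient of `t` form a subalgebra `k[[t², t³]]` of `k[[t]]`.
It contains `k[[H]]` because `1 ∉ H`, and it contains `ω_H` because `t ^ (f - x) = t` only for
`x = f - 1 ∉ QF(H)`. Being closed under multiplication, it then contains every `ω_Hⁿ` with
`n ≥ 1`, but it does not contain `t`.
-/

open PowerSeries

theorem Submodule.pow_le_of_le_of_mul_le {R A : Type*} [CommSemiring R] [Semiring A]
    [Algebra R A] {M P : Submodule R A} (hM : M ≤ P) (hP : P * P ≤ P) :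
    ∀ {n : ℕ}, n ≠ 0 → M ^ n ≤ P
  | 0, h => absurd rfl h
  | 1, _ => (Submodule.pow_one M).le.trans hM
  | n + 2, _ => by
    rw [Submodule.pow_succ]
    exact (mul_le_mul' (pow_le_of_le_of_mul_le hM hP n.succ_ne_zero) hM).trans hP

def Subalgebra.toSubmoduleOfLE {R S : Type*} [CommSemiring R] [CommSemiring S] [Algebra R S]
    {A B : Subalgebra R S} (h : B ≤ A) : Submodule B S where
  carrier := A
  add_mem' := A.add_mem
  zero_mem' := A.zero_mem
  smul_mem' b _ hx := A.mul_mem (h b.2) hx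

theorem Subalgebra.toSubmoduleOfLE_mul_self_le {R S : Type*} [CommSemiring R] [CommSemiring S]
    [Algebra R S] {A B : Subalgebra R S} (h : B ≤ A) :
    toSubmoduleOfLE h * toSubmoduleOfLE h ≤ toSubmoduleOfLE h :=
  Submodule.mul_le.2 fun _ hx _ hy => A.mul_mem hx hy

def PowerSeries.noLinearTerm (k : Type*) [CommRing k] : Subalgebra k k⟦X⟧ where
  carrier := {g | coeff 1 g = 0}
  mul_mem' {a b} (ha : coeff 1 a = 0) (hb : coeff 1 b = 0) := by
    simp [coeff_one_mul, ha, hb]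
  one_mem' := by simp
  add_mem' {a b} (ha : coeff 1 a = 0) (hb : coeff 1 b = 0) := by simp [ha, hb]
  zero_mem' := by simp
  algebraMap_mem' r := by simp

theorem PowerSeries.mem_noLinearTerm {k : Type*} [CommRing k] {g : k⟦X⟧} :
    g ∈ noLinearTerm k ↔ coeff 1 g = 0 :=
  Iff.rfl

theorem PowerSeries.X_notMem_noLinearTerm (k : Type*) [CommRing k] [Nontrivial k] :
    (X : k⟦X⟧) ∉ noLinearTerm k := by
  simp [mem_noLinearTerm]

theorem AddSubmonoid.one_notMem_of_ne_top {H : AddSubmonoid ℕ} (hH : H ≠ ⊤) : 1 ∉ H := by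
  refine fun h1 => hH (eq_top_iff.2 fun n _ => ?_)
  simpa using H.nsmul_mem h1 n

section

variable (k : Type*) [Field k] {H : AddSubmonoid ℕ}

theorem semigroupAlgebra_le_noLinearTerm (h1 : 1 ∉ H) :
    semigroupAlgebra k H ≤ noLinearTerm k :=
  fun _ hg => hg 1 h1

theorem canonicalModule_le_noLinearTerm (h1 : 1 ∉ H) (hqf : frobeniusNumber H - 1 ∉ QF H) :
    canonicalModule k H ≤ Subalgebra.toSubmoduleOfLE (semigroupAlgebra_le_noLinearTerm k h1) := by
  rw [canonicalModule, Submodule.span_le]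
  rintro _ ⟨x, hx, rfl⟩
  have hx1 : frobeniusNumber H - x ≠ 1 := fun h =>
    hqf (by rwa [show frobeniusNumber H - 1 = x by omega])
  exact mem_noLinearTerm.2 (by simp [coeff_X_pow, hx1.symm])

end

theorem stmt11_general (k : Type*) [Field k] (H : AddSubmonoid ℕ)
    (hne : H ≠ ⊤)
    (hqf : frobeniusNumber H - 1 ∉ QF H) :
    ∀ n : ℕ, 1 ≤ n → (PowerSeries.X : PowerSeries k) ∉ canonicalModule k H ^ n
      ∧ canonicalModule k H ^ n ≠ ⊤ := by
  intro n hn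
  have h1 := AddSubmonoid.one_notMem_of_ne_top hne
  have hX : (X : k⟦X⟧) ∉ canonicalModule k H ^ n := fun hX =>
    X_notMem_noLinearTerm k <| Submodule.pow_le_of_le_of_mul_le
      (canonicalModule_le_noLinearTerm k h1 hqf)
      (Subalgebra.toSubmoduleOfLE_mul_self_le _) (by omega) hX
  exact ⟨hX, fun htop => hX (htop ▸ Submodule.mem_top)⟩

/-- Let `H ≠ ℕ` be a numerical semigroup with Frobenius number `f` and
`R = k[[H]]`. If `f - 1 ∉ QF(H)`, then `t ∉ ω_Hⁿ` for every `n ≥ 1`; in particular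
`ω_Hⁿ ≠ k[[t]]` for all `n ≥ 1`. -/
theorem stmt11 (k : Type*) [Field k] (H : AddSubmonoid ℕ)
    (hfin : ((H : Set ℕ)ᶜ).Finite) (hne : H ≠ ⊤)
    (hqf : frobeniusNumber H - 1 ∉ QF H) :
    ∀ n : ℕ, 1 ≤ n → (PowerSeries.X : PowerSeries k) ∉ canonicalModule k H ^ n
      ∧ canonicalModule k H ^ n ≠ ⊤ :=
  stmt11_general k H hne hqf
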